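/- Let M := ℕ → Bool, define negation ¬ : M → M by (¬a) n := !(a (n+1)), and define the alternating order ≼ on M by: a ≼ b iff for every even n, a n ≤ b n, and for every odd n, b n ≤ a n (with false < true). Let r ⊆ M × M be any relation that is closed under coordinatewise negation (if (a, b) ∈ r then (¬a, ¬b) ∈ r) and is contained in {(a, b) : a 0 ≤ b 0}. Then r ⊆ {(a, b) : a ≼ b}. In particular, since ≼ itself is closed under the coordinatewise operations ⊔, ⊓, ¬ of M₁ and is contained in {(a, b) : a 0 ≤ b 0}, the alternating order ≼ is the unique subalgebra of M₁² that is maximal among subalgebras contained in {(a, b) : a 0 ≤ b 0}. -/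

import Mathlib

/-- The underlying set `{0,1}^{ℕ₀}`. -/
abbrev OckM : Type := ℕ → Bool

/-- Pointwise join. -/
def ockJoin (a b : OckM) : OckM := fun n => a n || b n

/-- Pointwise meet. -/
def ockMeet (a b : OckM) : OckM := fun n => a n && b n

/-- Negation: shift left, then complement. -/
def ockNeg (a : OckM) : OckM := fun n => !(a (n + 1))

/-- The alternating order `≼` on `{0,1}^{ℕ₀}`. -/
def altLe (a b : OckM) : Prop :=
  ∀ n : ℕ, (Even n → a n ≤ b n) ∧ (Odd n → b n ≤ a n)

/-- A subset of `M × M` closed under the coordinatewise operations `⊔`, `⊓`, `¬`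
of the Ockham algebra `M₁`, i.e. a subalgebra of `M₁²`. -/
def IsOckSubalgebra (s : Set (OckM × OckM)) : Prop :=
  (∀ p q, p ∈ s → q ∈ s → (ockJoin p.1 q.1, ockJoin p.2 q.2) ∈ s) ∧
  (∀ p q, p ∈ s → q ∈ s → (ockMeet p.1 q.1, ockMeet p.2 q.2) ∈ s) ∧
  (∀ p, p ∈ s → (ockNeg p.1, ockNeg p.2) ∈ s)

/-
The `n`-th iterate of `¬` reads off coordinate `n`, complemented `n` times:
`(¬ⁿa) 0 = a n` for even `n` and `!(a n)` for odd `n`. A relation closed under `¬` and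
contained in `{(a, b) : a 0 ≤ b 0}` therefore compares every coordinate, in the direction
dictated by its parity, which is exactly `≼`. Conversely `≼` is closed under `⊔` and `⊓`
because these are monotone, and under `¬` because the shift swaps parities while the
complement reverses the order. So `≼` is the greatest subalgebra inside `{(a, b) : a 0 ≤ b 0}`,
and every maximal one coincides with it.
-/

theorem ockNeg_iterate_apply (n : ℕ) (a : OckM) (k : ℕ) :
    ockNeg^[n] a k = Bool.not^[n] (a (k + n)) := by
  induction n generalizing a k with
  | zero => rfl
  | succ n ih =>
    rw [Function.iterate_succ_apply, ih, Function.iterate_succ_apply]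
    rfl

theorem altLe_of_forall_ockNeg_iterate_apply_zero_le {a b : OckM}
    (h : ∀ n, ockNeg^[n] a 0 ≤ ockNeg^[n] b 0) : altLe a b := by
  intro n
  have hn := h n
  simp only [ockNeg_iterate_apply, Nat.zero_add] at hn
  refine ⟨fun he => ?_, fun ho => ?_⟩
  · rwa [Bool.involutive_not.iterate_even he] at hn
  · rw [Bool.involutive_not.iterate_odd ho] at hn
    exact compl_le_compl_iff_le.mp hn

theorem subset_altLe_of_ockNeg_closed (r : Set (OckM × OckM))
    (hneg : ∀ p, p ∈ r → (ockNeg p.1, ockNeg p.2) ∈ r)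
    (hsub : r ⊆ {p : OckM × OckM | p.1 0 ≤ p.2 0}) :
    r ⊆ {p : OckM × OckM | altLe p.1 p.2} := by
  intro p hp
  have hmaps : Set.MapsTo (Prod.map ockNeg ockNeg) r r := fun q hq => hneg q hq
  refine altLe_of_forall_ockNeg_iterate_apply_zero_le fun n => ?_
  have hiter : (ockNeg^[n] p.1, ockNeg^[n] p.2) ∈ r := by
    have := hmaps.iterate n hp
    rwa [Prod.map_iterate] at this
  exact hsub hiter

theorem altLe_apply_zero_le {a b : OckM} (h : altLe a b) : a 0 ≤ b 0 :=
  (h 0).1 .zero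

theorem altLe_ockJoin {a b c d : OckM} (hab : altLe a b) (hcd : altLe c d) :
    altLe (ockJoin a c) (ockJoin b d) := fun n =>
  ⟨fun he => sup_le_sup ((hab n).1 he) ((hcd n).1 he),
    fun ho => sup_le_sup ((hab n).2 ho) ((hcd n).2 ho)⟩

theorem altLe_ockMeet {a b c d : OckM} (hab : altLe a b) (hcd : altLe c d) :
    altLe (ockMeet a c) (ockMeet b d) := fun n =>
  ⟨fun he => inf_le_inf ((hab n).1 he) ((hcd n).1 he),
    fun ho => inf_le_inf ((hab n).2 ho) ((hcd n).2 ho)⟩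

theorem altLe_ockNeg {a b : OckM} (h : altLe a b) : altLe (ockNeg a) (ockNeg b) := fun n =>
  ⟨fun he => compl_le_compl ((h (n + 1)).2 he.add_one),
    fun ho => compl_le_compl ((h (n + 1)).1 ho.add_one)⟩

theorem isOckSubalgebra_altLe : IsOckSubalgebra {p : OckM × OckM | altLe p.1 p.2} :=
  ⟨fun _ _ hp hq => altLe_ockJoin hp hq, fun _ _ hp hq => altLe_ockMeet hp hq,
    fun _ hp => altLe_ockNeg hp⟩

/-- Verification of Condition (3) in the proof of Theorem 4.7:
(1) any relation closed under coordinatewise negation and contained in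
`(π₀, π₀)⁻¹(≤)` is contained in the alternating order `≼`;
(2) `≼` is itself a subalgebra of `M₁²` contained in `(π₀, π₀)⁻¹(≤)`;
(3) consequently `≼` is the unique subalgebra of `M₁²` maximal among
subalgebras contained in `(π₀, π₀)⁻¹(≤)`. -/
theorem altLe_unique_maximal :
    (∀ r : Set (OckM × OckM),
      (∀ p, p ∈ r → (ockNeg p.1, ockNeg p.2) ∈ r) →
      r ⊆ {p : OckM × OckM | p.1 0 ≤ p.2 0} →
      r ⊆ {p : OckM × OckM | altLe p.1 p.2}) ∧
    (IsOckSubalgebra {p : OckM × OckM | altLe p.1 p.2} ∧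
      {p : OckM × OckM | altLe p.1 p.2} ⊆ {p : OckM × OckM | p.1 0 ≤ p.2 0}) ∧
    (∀ s : Set (OckM × OckM), IsOckSubalgebra s →
      s ⊆ {p : OckM × OckM | p.1 0 ≤ p.2 0} →
      (∀ s' : Set (OckM × OckM), IsOckSubalgebra s' → s ⊆ s' →
        s' ⊆ {p : OckM × OckM | p.1 0 ≤ p.2 0} → s' = s) →
      s = {p : OckM × OckM | altLe p.1 p.2}) := by
  have altLe_subset : {p : OckM × OckM | altLe p.1 p.2} ⊆ {p : OckM × OckM | p.1 0 ≤ p.2 0} :=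
    fun _ hp => altLe_apply_zero_le hp
  refine ⟨subset_altLe_of_ockNeg_closed, ⟨isOckSubalgebra_altLe, altLe_subset⟩, ?_⟩
  intro s hs hsub hmax
  exact (hmax _ isOckSubalgebra_altLe (subset_altLe_of_ockNeg_closed s hs.2.2 hsub)
    altLe_subset).symm
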